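/- arXiv:1508.00674 — 6 statements merged into one kernel-verified Lean document; each statement's English description precedes it below -/
import Mathlib

section
/- If f : X → Y is a (λ,ε)-quasi-isometry between metric spaces and X is bounded with diameter diam(X), then the Gromov-Hausdorff distance satisfies d_GH(X,Y) < 2(λ-1)·diam(X) + 2ε. -/
/-- `f : X → Y` is a `(lam, ε)`-quasi-isometry: the image `f(X)` is an `ε`-net in `Y` and
`lam⁻¹ d(x,x') − ε < d(f x, f x') < lam·d(x,x') + ε` for all `x, x'`. -/
def QuasiIsometry {X Y : Type*} [MetricSpace X] [MetricSpace Y]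
    (f : X → Y) (lam ε : ℝ) : Prop :=
  (∀ y : Y, ∃ x : X, dist (f x) y ≤ ε) ∧
  ∀ x x' : X, lam⁻¹ * dist x x' - ε < dist (f x) (f x') ∧
    dist (f x) (f x') < lam * dist x x' + ε

/-- `d_GH(X, Y) < ε`: there is a metric on the disjoint union `X ⊕ Y`, extending the metrics
of `X` and `Y`, in which each space lies in the `ε`-neighborhood of the other
(i.e. the Hausdorff distance of the two copies is `< ε`). -/
def GHDistLT (X Y : Type*) [MetricSpace X] [MetricSpace Y] (ε : ℝ) : Prop :=
  ∃ d : X ⊕ Y → X ⊕ Y → ℝ,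
    (∀ a b, d a b = d b a) ∧
    (∀ a b c, d a c ≤ d a b + d b c) ∧
    (∀ x x' : X, d (Sum.inl x) (Sum.inl x') = dist x x') ∧
    (∀ y y' : Y, d (Sum.inr y) (Sum.inr y') = dist y y') ∧
    (∀ a b, 0 ≤ d a b) ∧
    (∀ x : X, ∃ y : Y, d (Sum.inl x) (Sum.inr y) < ε) ∧
    (∀ y : Y, ∃ x : X, d (Sum.inl x) (Sum.inr y) < ε)

/-- **Quasi-isometries give GH bounds.** If `f : X → Y` is a `(lam, ε)`-quasi-isometry and `X`
is bounded, then `d_GH(X, Y) < 2(lam − 1)·diam(X) + 2ε`. -/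
theorem stmt1 {X Y : Type*} [MetricSpace X] [MetricSpace Y]
    (f : X → Y) (lam ε : ℝ) (hlam : 1 ≤ lam) (hε : 0 < ε)
    (hf : QuasiIsometry f lam ε)
    (hb : Bornology.IsBounded (Set.univ : Set X)) :
    GHDistLT X Y (2 * (lam - 1) * Metric.diam (Set.univ : Set X) + 2 * ε) := by
  obtain ⟨hnet, hqi⟩ := hf
  obtain ⟨D, hDdef⟩ : ∃ D, D = Metric.diam (Set.univ : Set X) := ⟨_, rfl⟩
  have hD0 : 0 ≤ D := hDdef ▸ Metric.diam_nonneg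
  have hlam0 : (0:ℝ) < lam := lt_of_lt_of_le one_pos hlam
  have hlD : 0 ≤ (lam - 1) * D := mul_nonneg (by linarith) hD0
  obtain ⟨c, hc⟩ : ∃ c : ℝ, c = (lam - 1) * D + 3/4 * ε := ⟨_, rfl⟩
  have hc0 : 0 < c := by rw [hc]; linarith
  have hub : ∀ a b : X, dist a b ≤ D := fun a b => hDdef ▸
    Metric.dist_le_diam_of_mem hb (Set.mem_univ a) (Set.mem_univ b)
  have hexp : ∀ a b : X, dist (f a) (f b) < lam * dist a b + ε := fun a b => (hqi a b).2
  have key : ∀ a b : X, dist a b < lam * dist (f a) (f b) + lam * ε := by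
    intro a b
    have h1 := (hqi a b).1
    have h2 : lam * (lam⁻¹ * dist a b - ε) < lam * dist (f a) (f b) :=
      mul_lt_mul_of_pos_left h1 hlam0
    have h3 : lam * (lam⁻¹ * dist a b) = dist a b := by field_simp
    nlinarith [h2, h3]
  -- Key inequality 1: for the X-Y-X triangle
  have K1 : ∀ (a b : X) (y : Y), dist a b ≤ 2 * c + (dist (f a) y + dist (f b) y) := by
    intro a b y
    have hs : dist (f a) (f b) ≤ dist (f a) y + dist (f b) y := by
      have := dist_triangle (f a) y (f b)
      have := dist_comm y (f b)
      linarith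
    have hk := key a b
    have hd := hub a b
    have hn1 : (0:ℝ) ≤ dist (f a) y := dist_nonneg
    have hn2 : (0:ℝ) ≤ dist (f b) y := dist_nonneg
    rcases le_or_gt (3/2) lam with h | h
    · have : D ≤ 2 * (lam - 1) * D := by nlinarith
      linarith
    · rcases le_or_gt D (dist (f a) y + dist (f b) y) with h2 | h2
      · linarith
      · have hm : lam * dist (f a) (f b) ≤ lam * (dist (f a) y + dist (f b) y) :=
          mul_le_mul_of_nonneg_left hs hlam0.le
        nlinarith [mul_nonneg (by linarith : (0:ℝ) ≤ lam - 1)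
          (by linarith : (0:ℝ) ≤ D - (dist (f a) y + dist (f b) y))]
  -- Key inequality 2: for the Y-X-Y triangle
  have K2 : ∀ (a b x : X), dist (f a) (f b) ≤ dist x a + dist x b + 2 * c := by
    intro a b x
    have hab : dist a b ≤ dist x a + dist x b := by
      have := dist_triangle a x b
      have := dist_comm a x
      linarith
    have he := hexp a b
    have hd := hub a b
    have hn1 : (0:ℝ) ≤ dist x a := dist_nonneg
    have hn2 : (0:ℝ) ≤ dist x b := dist_nonneg
    rcases le_or_gt (dist x a + dist x b) (2 * D) with h | h
    · have hm : lam * dist a b ≤ lam * (dist x a + dist x b) :=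
        mul_le_mul_of_nonneg_left hab hlam0.le
      nlinarith [mul_nonneg (by linarith : (0:ℝ) ≤ lam - 1)
        (by linarith : (0:ℝ) ≤ 2 * D - (dist x a + dist x b))]
    · have hm : lam * dist a b ≤ lam * D := mul_le_mul_of_nonneg_left hd hlam0.le
      nlinarith [mul_nonneg hlam0.le hD0]
  -- the cross distance
  set g : X → Y → ℝ := fun x y => sInf (Set.range fun a => dist x a + c + dist (f a) y)
    with hg
  have gbdd : ∀ (x : X) (y : Y), BddBelow (Set.range fun a => dist x a + c + dist (f a) y) := by
    intro x y
    refine ⟨0, ?_⟩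
    rintro r ⟨a, rfl⟩
    have h1 : (0:ℝ) ≤ dist x a := dist_nonneg
    have h2 : (0:ℝ) ≤ dist (f a) y := dist_nonneg
    simp only
    linarith
  have g_le : ∀ (x : X) (y : Y) (a : X), g x y ≤ dist x a + c + dist (f a) y := by
    intro x y a
    exact csInf_le (gbdd x y) (Set.mem_range_self a)
  have g_ge : ∀ (x : X) (y : Y) (t : ℝ),
      (∀ a : X, t ≤ dist x a + c + dist (f a) y) → t ≤ g x y := by
    intro x y t ht
    refine le_csInf ⟨_, Set.mem_range_self x⟩ ?_
    rintro r ⟨a, rfl⟩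
    exact ht a
  have gpos : ∀ (x : X) (y : Y), 0 ≤ g x y := by
    intro x y
    apply g_ge
    intro a
    have h1 : (0:ℝ) ≤ dist x a := dist_nonneg
    have h2 : (0:ℝ) ≤ dist (f a) y := dist_nonneg
    linarith
  have L1 : ∀ (x x' : X) (y : Y), g x y ≤ dist x x' + g x' y := by
    intro x x' y
    have h1 : g x y - dist x x' ≤ g x' y := by
      apply g_ge
      intro a
      have h2 := g_le x y a
      have h3 := dist_triangle x x' a
      linarith
    linarith
  have L2 : ∀ (x : X) (y y' : Y), g x y ≤ g x y' + dist y' y := by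
    intro x y y'
    have h1 : g x y - dist y' y ≤ g x y' := by
      apply g_ge
      intro a
      have h2 := g_le x y a
      have h3 := dist_triangle (f a) y' y
      linarith
    linarith
  have L3 : ∀ (x x' : X) (y : Y), dist x x' ≤ g x y + g x' y := by
    intro x x' y
    have h1 : dist x x' - g x' y ≤ g x y := by
      apply g_ge
      intro a
      have h2 : dist x x' - (dist x a + c + dist (f a) y) ≤ g x' y := by
        apply g_ge
        intro b
        have t4 := dist_triangle4 x a b x'
        have k := K1 a b y
        have hcm := dist_comm b x'
        linarith
      linarith
    linarith
  have L4 : ∀ (x : X) (y y' : Y), dist y y' ≤ g x y + g x y' := by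
    intro x y y'
    have h1 : dist y y' - g x y' ≤ g x y := by
      apply g_ge
      intro a
      have h2 : dist y y' - (dist x a + c + dist (f a) y) ≤ g x y' := by
        apply g_ge
        intro b
        have t4 := dist_triangle4 y (f a) (f b) y'
        have k := K2 a b x
        have hcm := dist_comm y (f a)
        linarith
      linarith
    linarith
  refine ⟨fun p q =>
    Sum.elim (fun x => Sum.elim (fun x' => dist x x') (fun y => g x y) q)
      (fun y => Sum.elim (fun x => g x y) (fun y' => dist y y') q) p,
    ?_, ?_, ?_, ?_, ?_, ?_, ?_⟩
  · rintro (x | y) (x' | y') <;> simp [dist_comm]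
  · rintro (x | y) (x' | y') (x'' | y'') <;>
      simp only [Sum.elim_inl, Sum.elim_inr]
    · exact dist_triangle x x' x''
    · exact L1 x x' y''
    · exact L3 x x'' y'
    · linarith [L2 x y'' y']
    · linarith [L1 x'' x' y, dist_comm x' x'']
    · exact L4 x' y y''
    · linarith [L2 x'' y y', dist_comm y y']
    · exact dist_triangle y y' y''
  · intro x x'; rfl
  · intro y y'; rfl
  · rintro (x | y) (x' | y') <;> simp only [Sum.elim_inl, Sum.elim_inr]
    · exact dist_nonneg
    · exact gpos x y'
    · exact gpos x' y
    · exact dist_nonneg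
  · intro x
    refine ⟨f x, ?_⟩
    simp only [Sum.elim_inl, Sum.elim_inr]
    have h1 := g_le x (f x) x
    simp only [dist_self] at h1
    rw [← hDdef]
    linarith [hc, hlD]
  · intro y
    obtain ⟨x, hx⟩ := hnet y
    refine ⟨x, ?_⟩
    simp only [Sum.elim_inl, Sum.elim_inr]
    have h1 := g_le x y x
    simp only [dist_self] at h1
    rw [← hDdef]
    linarith [hc, hlD, hx]
end

section
/- Let X be a metric space and Y a length space with d_GH(X,Y) < δ. Then X is 6δ-intrinsic: for every pair of points x, x' ∈ X there exists a 6δ-straight 3δ-chain x = x_1, x_2, ..., x_N = x' in X. -/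
/-- Prepend an element to a sequence. -/
def prep {α : Sort*} (a : α) (f : ℕ → α) : ℕ → α := fun l => if l = 0 then a else f (l - 1)

@[simp] lemma prep_zero {α : Sort*} (a : α) (f : ℕ → α) : prep a f 0 = a := rfl

@[simp] lemma prep_succ {α : Sort*} (a : α) (f : ℕ → α) (m : ℕ) : prep a f (m + 1) = f m := by
  simp [prep]

lemma sumShift (f g : ℕ → ℝ) (h : ∀ m, f (m + 1) = g m) (a b : ℕ) :
    (∑ m ∈ Finset.Ico (a + 1) (b + 1), f m) = ∑ m ∈ Finset.Ico a b, g m := by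
  rw [Finset.sum_Ico_eq_sum_range, Finset.sum_Ico_eq_sum_range]
  have hb : b + 1 - (a + 1) = b - a := by omega
  rw [hb]
  refine Finset.sum_congr rfl fun i _ => ?_
  have hx : a + 1 + i = (a + i) + 1 := by omega
  rw [hx, h]

lemma chainTri {Y : Type*} [MetricSpace Y] (z : ℕ → Y) :
    ∀ a b : ℕ, a ≤ b → dist (z a) (z b) ≤ ∑ t ∈ Finset.Ico a b, dist (z t) (z (t + 1)) := by
  intro a b hab
  induction b, hab using Nat.le_induction with
  | base => simp
  | succ b hab ih =>
    rw [Finset.sum_Ico_succ_top hab]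
    calc dist (z a) (z (b + 1)) ≤ dist (z a) (z b) + dist (z b) (z (b + 1)) :=
          dist_triangle _ _ _
      _ ≤ _ := by linarith

/-- **GH-closeness to a length space makes the metric almost intrinsic.**
Let `X` be a metric space and `Y` a length space (expressed by the property that any two
points of `Y` are joined, for every `ε > 0`, by a chain with consecutive distances `< ε`
whose total length is `< d(y, y') + ε`), with `d_GH(X, Y) < δ`.  Then `X` is `6δ`-intrinsic:
every pair of points `x, x' ∈ X` is joined by a `6δ`-straight `3δ`-chain. -/
theorem stmt3 {X Y : Type*} [MetricSpace X] [MetricSpace Y] (δ : ℝ) (hδ : 0 < δ)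
    (hlen : ∀ (y y' : Y) (ε : ℝ), 0 < ε → ∃ (N : ℕ) (c : ℕ → Y), 1 ≤ N ∧
      c 0 = y ∧ c N = y' ∧ (∀ i < N, dist (c i) (c (i + 1)) < ε) ∧
      ∑ i ∈ Finset.range N, dist (c i) (c (i + 1)) < dist y y' + ε)
    (hgh : GHDistLT X Y δ) :
    ∀ x x' : X, ∃ (N : ℕ) (c : ℕ → X), 1 ≤ N ∧ c 0 = x ∧ c N = x' ∧
      (∀ i < N, dist (c i) (c (i + 1)) < 3 * δ) ∧
      (∀ i j k : ℕ, i < j → j < k → k ≤ N →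
        dist (c i) (c j) + dist (c j) (c k) < dist (c i) (c k) + 6 * δ) := by
  classical
  obtain ⟨dd, hsym, htri, hXX, hYY, hnn, hXtoY, hYtoX⟩ := hgh
  intro x x'
  obtain ⟨y', he'⟩ := hXtoY x'
  -- terminal (one-step) construction
  have terminal : ∀ (u : X) (w : Y) (β : ℝ), dd (Sum.inl u) (Sum.inr w) < δ → 0 < β →
      β ≤ δ - dd (Sum.inl u) (Sum.inr w) → dist w y' < δ / 2 →
      ∃ (M : ℕ) (c : ℕ → X) (ws : ℕ → Y) (η : ℕ → ℝ),
        1 ≤ M ∧ c 0 = u ∧ c M = x' ∧ ws 0 = w ∧ ws M = y' ∧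
        (∀ l, l ≤ M → dd (Sum.inl (c l)) (Sum.inr (ws l)) < δ) ∧
        (∀ l, 0 ≤ η l) ∧
        (∀ l, l < M → dist (ws l) (ws (l + 1)) < δ) ∧
        (∀ l, l < M →
          dist (ws l) (ws (l + 1)) < (dist (ws l) y' - dist (ws (l + 1)) y') + η l) ∧
        (∑ m ∈ Finset.Ico 0 M, η m) ≤ β ∧
        (∀ i, i ≤ M →
          (∑ m ∈ Finset.Ico i M, η m) ≤ δ - dd (Sum.inl (c i)) (Sum.inr (ws i))) := by
    intro u w β hE hβ0 hβs hwy
    refine ⟨1, prep u (fun _ => x'), prep w (fun _ => y'), fun _ => β / 2,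
      le_refl 1, rfl, rfl, rfl, rfl, ?_, ?_, ?_, ?_, ?_, ?_⟩
    · intro l hl
      rcases l with _ | m
      · simpa using hE
      · have hm : m = 0 := by omega
        subst hm
        simpa using he'
    · intro l; linarith
    · intro l hl
      have hl0 : l = 0 := by omega
      subst hl0
      simpa using lt_trans hwy (by linarith)
    · intro l hl
      have hl0 : l = 0 := by omega
      subst hl0
      simp only [prep_zero, prep_succ, dist_self]
      linarith
    · rw [← Finset.range_eq_Ico, Finset.sum_range_one]
      linarith
    · intro i hi
      rcases i with _ | m
      · rw [← Finset.range_eq_Ico, Finset.sum_range_one]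
        simp only [prep_zero]
        linarith
      · have hm : m = 0 := by omega
        subst hm
        rw [Finset.Ico_self, Finset.sum_empty]
        simp only [prep_succ]
        linarith
  -- main recursive construction: greedy walk toward y'
  have REC : ∀ n : ℕ, ∀ (u : X) (w : Y) (β : ℝ),
      dd (Sum.inl u) (Sum.inr w) < δ → 0 < β →
      β ≤ δ - dd (Sum.inl u) (Sum.inr w) → β ≤ δ / 2 →
      dist w y' ≤ (n : ℝ) * (δ / 4) →
      ∃ (M : ℕ) (c : ℕ → X) (ws : ℕ → Y) (η : ℕ → ℝ),
        1 ≤ M ∧ c 0 = u ∧ c M = x' ∧ ws 0 = w ∧ ws M = y' ∧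
        (∀ l, l ≤ M → dd (Sum.inl (c l)) (Sum.inr (ws l)) < δ) ∧
        (∀ l, 0 ≤ η l) ∧
        (∀ l, l < M → dist (ws l) (ws (l + 1)) < δ) ∧
        (∀ l, l < M →
          dist (ws l) (ws (l + 1)) < (dist (ws l) y' - dist (ws (l + 1)) y') + η l) ∧
        (∑ m ∈ Finset.Ico 0 M, η m) ≤ β ∧
        (∀ i, i ≤ M →
          (∑ m ∈ Finset.Ico i M, η m) ≤ δ - dd (Sum.inl (c i)) (Sum.inr (ws i))) := by
    intro n
    induction n with
    | zero =>
      intro u w β hE hβ0 hβs hβδ hV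
      apply terminal u w β hE hβ0 hβs
      have h0 : dist w y' ≤ 0 := by simpa using hV
      have := dist_nonneg (x := w) (y := y')
      linarith
    | succ n ih =>
      intro u w β hE hβ0 hβs hβδ hV
      push_cast at hV
      set ε := min (β / 2) (δ / 8) with hεdef
      have hε0 : 0 < ε := lt_min (by linarith) (by linarith)
      have hεβ : ε ≤ β / 2 := min_le_left _ _
      have hεδ : ε ≤ δ / 8 := min_le_right _ _
      obtain ⟨R, z, _, hz0, hzR, hgap, hsum⟩ := hlen w y' ε hε0
      by_cases hcase : (∑ s ∈ Finset.range R, dist (z s) (z (s + 1))) < δ / 2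
      · apply terminal u w β hE hβ0 hβs
        have h1 := chainTri z 0 R (Nat.zero_le R)
        rw [hz0, hzR, ← Finset.range_eq_Ico] at h1
        linarith
      · push_neg at hcase
        have hex : ∃ t, δ / 2 ≤ ∑ s ∈ Finset.range t, dist (z s) (z (s + 1)) := ⟨R, hcase⟩
        obtain ⟨r', hr'⟩ : ∃ r', Nat.find hex = r' + 1 := by
          have h0 : ¬ (δ / 2 ≤ ∑ s ∈ Finset.range 0, dist (z s) (z (s + 1))) := by
            simp only [Finset.range_zero, Finset.sum_empty]
            linarith
          have hne : Nat.find hex ≠ 0 := by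
            intro h
            have hspec := Nat.find_spec hex
            rw [h] at hspec
            exact h0 hspec
          exact ⟨Nat.find hex - 1, by omega⟩
        have hrspec : δ / 2 ≤ ∑ s ∈ Finset.range (r' + 1), dist (z s) (z (s + 1)) := by
          have := Nat.find_spec hex
          rwa [hr'] at this
        have hrmin : (∑ s ∈ Finset.range r', dist (z s) (z (s + 1))) < δ / 2 := by
          have := Nat.find_min hex (m := r') (by omega)
          linarith [not_le.mp this]
        have hrR : r' + 1 ≤ R := by
          by_contra hcon
          push_neg at hcon
          have hsub : (∑ s ∈ Finset.range R, dist (z s) (z (s + 1))) ≤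
              ∑ s ∈ Finset.range r', dist (z s) (z (s + 1)) := by
            apply Finset.sum_le_sum_of_subset_of_nonneg
            · exact Finset.range_subset_range.mpr (by omega)
            · intro _ _ _; exact dist_nonneg
          linarith
        have hgapr : dist (z r') (z (r' + 1)) < ε := hgap r' (by omega)
        have hPr : (∑ s ∈ Finset.range (r' + 1), dist (z s) (z (s + 1))) < δ / 2 + ε := by
          rw [Finset.sum_range_succ]
          linarith
        have htail : dist (z (r' + 1)) y' ≤
            (∑ s ∈ Finset.range R, dist (z s) (z (s + 1))) -
            (∑ s ∈ Finset.range (r' + 1), dist (z s) (z (s + 1))) := by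
          have h2 := chainTri z (r' + 1) R hrR
          rw [hzR, Finset.sum_Ico_eq_sub _ hrR] at h2
          exact h2
        have hVp : dist (z (r' + 1)) y' ≤ (n : ℝ) * (δ / 4) := by
          nlinarith [htail, hsum, hrspec, hεδ, hV, hδ]
        have hstep0 : dist w (z (r' + 1)) <
            (dist w y' - dist (z (r' + 1)) y') + ε := by
          have h3 := chainTri z 0 (r' + 1) (Nat.zero_le _)
          rw [hz0, ← Finset.range_eq_Ico] at h3
          linarith
        have hYlt0 : dist w (z (r' + 1)) < δ := by
          have h3 := chainTri z 0 (r' + 1) (Nat.zero_le _)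
          rw [hz0, ← Finset.range_eq_Ico] at h3
          linarith
        obtain ⟨u', hu'⟩ := hYtoX (z (r' + 1))
        set β' := min (β - ε) (min (δ - dd (Sum.inl u') (Sum.inr (z (r' + 1)))) (δ / 2))
          with hβ'def
        have hβ'0 : 0 < β' := by
          apply lt_min (by linarith)
          exact lt_min (by linarith) (by linarith)
        obtain ⟨M', c', ws', η', hM'1, hc'0, hc'M, hws'0, hws'M, hE'all, hηnn', hYlt',
            hYstep', hsumβ', hsumtail'⟩ :=
          ih u' (z (r' + 1)) β' hu' hβ'0
            (le_trans (min_le_right _ _) (min_le_left _ _))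
            (le_trans (min_le_right _ _) (min_le_right _ _)) hVp
        have hβ'β : β' ≤ β - ε := min_le_left _ _
        refine ⟨M' + 1, prep u c', prep w ws', prep ε η', by omega, rfl, ?_, rfl, ?_,
          ?_, ?_, ?_, ?_, ?_, ?_⟩
        · rw [prep_succ, hc'M]
        · rw [prep_succ, hws'M]
        · intro l hl
          rcases l with _ | m
          · simpa using hE
          · rw [prep_succ, prep_succ]
            exact hE'all m (by omega)
        · intro l
          rcases l with _ | m
          · simpa using le_of_lt hε0
          · simpa using hηnn' m
        · intro l hl
          rcases l with _ | m
          · rw [show (0 : ℕ) + 1 = 0 + 1 from rfl, prep_zero, prep_succ, hws'0]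
            exact hYlt0
          · rw [prep_succ, prep_succ]
            exact hYlt' m (by omega)
        · intro l hl
          rcases l with _ | m
          · rw [show (0 : ℕ) + 1 = 0 + 1 from rfl, prep_zero, prep_succ, hws'0]
            simpa using hstep0
          · rw [prep_succ, prep_succ, prep_succ]
            exact hYstep' m (by omega)
        · rw [Finset.sum_eq_sum_Ico_succ_bot (by omega : 0 < M' + 1)]
          rw [show (0 : ℕ) + 1 = 0 + 1 from rfl,
            sumShift (prep ε η') η' (fun m => prep_succ ε η' m) 0 M']
          simp only [prep_zero]
          linarith
        · intro i hi
          rcases i with _ | m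
          · rw [Finset.sum_eq_sum_Ico_succ_bot (by omega : 0 < M' + 1)]
            rw [show (0 : ℕ) + 1 = 0 + 1 from rfl,
              sumShift (prep ε η') η' (fun m => prep_succ ε η' m) 0 M']
            simp only [prep_zero]
            linarith
          · rw [show m + 1 = m + 1 from rfl,
              sumShift (prep ε η') η' (fun m => prep_succ ε η' m) m M']
            rw [prep_succ, prep_succ]
            exact hsumtail' m (by omega)
  -- main assembly
  obtain ⟨y0, hy0⟩ := hXtoY x
  set β₀ := min (δ - dd (Sum.inl x) (Sum.inr y0)) (δ / 2) with hβ₀def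
  have hβ₀0 : 0 < β₀ := lt_min (by linarith) (by linarith)
  obtain ⟨n, hn⟩ := exists_nat_ge (dist y0 y' / (δ / 4))
  have hV0 : dist y0 y' ≤ (n : ℝ) * (δ / 4) := by
    rw [div_le_iff₀ (by linarith : (0 : ℝ) < δ / 4)] at hn
    linarith
  obtain ⟨M, c, ws, η, hM1, hc0, hcM, hws0, hwsM, hEall, hηnn, hYlt, hYstep, hsumβ,
      hsumtail⟩ := REC n x y0 β₀ hy0 hβ₀0 (min_le_left _ _) (min_le_right _ _) hV0
  -- basic transfer inequalities
  have crossUp : ∀ a b : ℕ, dist (c a) (c b) ≤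
      dd (Sum.inl (c a)) (Sum.inr (ws a)) + dist (ws a) (ws b) +
      dd (Sum.inl (c b)) (Sum.inr (ws b)) := by
    intro a b
    have h1 : dist (c a) (c b) = dd (Sum.inl (c a)) (Sum.inl (c b)) := (hXX _ _).symm
    have h2 := htri (Sum.inl (c a)) (Sum.inr (ws a)) (Sum.inl (c b))
    have h3 := htri (Sum.inr (ws a)) (Sum.inr (ws b)) (Sum.inl (c b))
    have h4 : dd (Sum.inr (ws a)) (Sum.inr (ws b)) = dist (ws a) (ws b) := hYY _ _
    have h5 : dd (Sum.inr (ws b)) (Sum.inl (c b)) = dd (Sum.inl (c b)) (Sum.inr (ws b)) :=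
      hsym _ _
    linarith
  have crossLow : ∀ a b : ℕ, dist (ws a) (ws b) ≤
      dd (Sum.inl (c a)) (Sum.inr (ws a)) + dist (c a) (c b) +
      dd (Sum.inl (c b)) (Sum.inr (ws b)) := by
    intro a b
    have h1 : dist (ws a) (ws b) = dd (Sum.inr (ws a)) (Sum.inr (ws b)) := (hYY _ _).symm
    have h2 := htri (Sum.inr (ws a)) (Sum.inl (c a)) (Sum.inr (ws b))
    have h3 := htri (Sum.inl (c a)) (Sum.inl (c b)) (Sum.inr (ws b))
    have h4 : dd (Sum.inl (c a)) (Sum.inl (c b)) = dist (c a) (c b) := hXX _ _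
    have h5 : dd (Sum.inr (ws a)) (Sum.inl (c a)) = dd (Sum.inl (c a)) (Sum.inr (ws a)) :=
      hsym _ _
    have h6 : dd (Sum.inl (c b)) (Sum.inr (ws b)) = dd (Sum.inl (c b)) (Sum.inr (ws b)) := rfl
    linarith
  have chainUp : ∀ i j : ℕ, i ≤ j → j ≤ M → dist (ws i) (ws j) ≤
      (dist (ws i) y' - dist (ws j) y') + ∑ m ∈ Finset.Ico i j, η m := by
    intro i j hij
    induction j, hij using Nat.le_induction with
    | base => intro _; simp
    | succ j hij ih =>
      intro hjM
      have hj : j < M := by omega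
      have h1 := hYstep j hj
      have h2 := ih (by omega)
      rw [Finset.sum_Ico_succ_top hij]
      have h3 := dist_triangle (ws i) (ws j) (ws (j + 1))
      linarith
  refine ⟨M, c, hM1, hc0, hcM, ?_, ?_⟩
  · -- spacing
    intro l hl
    have h1 := crossUp l (l + 1)
    have h2 := hYlt l hl
    have h3 := hEall l (by omega)
    have h4 := hEall (l + 1) (by omega)
    linarith
  · -- straightness
    intro i j k hij hjk hkM
    have hiM : i ≤ M := by omega
    have hjM : j ≤ M := by omega
    have Ei := hEall i hiM
    have Ej := hEall j hjM
    have Ek := hEall k hkM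
    have HU1 := chainUp i j (le_of_lt hij) hjM
    have HU2 := chainUp j k (le_of_lt hjk) hkM
    have Hcons := Finset.sum_Ico_consecutive η (le_of_lt hij) (le_of_lt hjk)
    have Hsub : (∑ m ∈ Finset.Ico i k, η m) ≤ ∑ m ∈ Finset.Ico i M, η m := by
      apply Finset.sum_le_sum_of_subset_of_nonneg
      · exact Finset.Ico_subset_Ico le_rfl hkM
      · intro _ _ _; exact hηnn _
    have Htail := hsumtail i hiM
    have hV5 := dist_triangle (ws i) (ws k) y'
    have hC1 := crossUp i j
    have hC2 := crossUp j k
    have hC3 := crossLow i k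
    linarith
end

section
/- Let r > 5δ > 0, let X and Y be δ-intrinsic metric spaces, and let f : X → Y be a map such that f(X) is a δ-net in Y and |d_Y(f(x),f(y)) − d_X(x,y)| < δ whenever min{d_X(x,y), d_Y(f(x),f(y))} < r. Then there is a universal constant C such that f is a (1 + C r^{-1} δ, Cδ)-quasi-isometry. -/
/-- `X` is `δ`-intrinsic: every pair of points is joined by a `δ`-straight `δ`-chain. -/
def DeltaIntrinsic (X : Type*) [MetricSpace X] (δ : ℝ) : Prop :=
  ∀ x y : X, ∃ (N : ℕ) (c : ℕ → X), 1 ≤ N ∧ c 0 = x ∧ c N = y ∧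
    (∀ i < N, dist (c i) (c (i + 1)) < δ) ∧
    (∀ i j k : ℕ, i < j → j < k → k ≤ N →
      dist (c i) (c j) + dist (c j) (c k) < dist (c i) (c k) + δ)

/-!
Along a `δ`-straight `δ`-chain from `x` to `y` one finds a point `z` with `d(x, z)` just below
the scale `ρ` at which the comparison is known, and `d(x, z) + d(z, y) < d(x, y) + δ`. Cutting
`[x, y]` at `z` costs an additive `O(δ)` while shortening the remaining distance by about `ρ`,
so by induction on the number of cuts a local bound `F ≤ d + O(δ)` becomes the global bound
`F ≤ (1 + O(δ / ρ)) d + O(δ)`. Applied on `X` to `F = d ∘ (f × f)` this bounds `f` from above;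
applied on `Y` to the distance pulled back by a quasi-inverse `g` of `f` (from the `δ`-net) it
bounds `f` from below.
-/

lemma exists_first_exit_of_chain {Z : Type*} [PseudoMetricSpace Z] {c : ℕ → Z} {z : Z}
    {N : ℕ} {t δ : ℝ} (hstep : ∀ i < N, dist (c i) (c (i + 1)) < δ)
    (h0 : dist z (c 0) < t) (hN : t ≤ dist z (c N)) :
    ∃ i, 0 < i ∧ i ≤ N ∧ t ≤ dist z (c i) ∧ dist z (c i) < t + δ := by
  classical
  have hex : ∃ i, t ≤ dist z (c i) := ⟨N, hN⟩
  have hiN : Nat.find hex ≤ N := Nat.find_min' hex hN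
  obtain ⟨j, hj⟩ : ∃ j, Nat.find hex = j + 1 :=
    Nat.exists_eq_succ_of_ne_zero fun h => (Nat.find_spec hex).not_gt (h ▸ h0)
  have hj_lt : dist z (c j) < t := not_le.mp (Nat.find_min hex (by omega))
  refine ⟨Nat.find hex, by omega, hiN, Nat.find_spec hex, ?_⟩
  calc dist z (c (Nat.find hex)) ≤ dist z (c j) + dist (c j) (c (j + 1)) := hj ▸ dist_triangle _ _ _
    _ < t + δ := by linarith [hstep j (by omega)]

theorem DeltaIntrinsic.le_mul_dist_add {X : Type*} [MetricSpace X] {δ ρ a K : ℝ}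
    (hX : DeltaIntrinsic X δ) (ha : 0 ≤ a) (hK : 0 ≤ K)
    (hKρ : a + δ ≤ K * (ρ - 2 * δ)) (F : X → X → ℝ)
    (htri : ∀ x y z, F x z ≤ F x y + F y z)
    (hloc : ∀ x y, dist x y < ρ → F x y ≤ dist x y + a) (x y : X) :
    F x y ≤ (1 + K) * dist x y + 2 * (a + δ) := by
  have hδ : 0 < δ := by
    obtain ⟨N, c, hN, -, -, hstep, -⟩ := hX x y
    exact dist_nonneg.trans_lt (hstep 0 hN)
  have hs : 0 < ρ - 2 * δ := by
    by_contra! hs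
    nlinarith
  suffices key : ∀ n : ℕ, ∀ x y, dist x y < n * (ρ - 2 * δ) →
      F x y ≤ (1 + K) * dist x y + 2 * (a + δ) by
    obtain ⟨n, hn⟩ := exists_nat_gt (dist x y / (ρ - 2 * δ))
    exact key n x y ((div_lt_iff₀ hs).mp hn)
  intro n
  induction n with
  | zero => intro x y h; simp at h; linarith [dist_nonneg (x := x) (y := y)]
  | succ n ih =>
    intro x y hxy
    by_cases hnear : dist x y < ρ
    · linarith [hloc x y hnear, mul_nonneg hK (dist_nonneg (x := x) (y := y))]
    obtain ⟨N, c, -, rfl, rfl, hstep, hstraight⟩ := hX x y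
    obtain ⟨i, hi0, hiN, hti, hit⟩ := exists_first_exit_of_chain (t := ρ - δ) hstep
      (by rw [dist_self]; linarith) (by linarith)
    have hiN : i < N := hiN.lt_of_ne fun h => hnear (by rw [← h]; linarith)
    have hcut := hstraight 0 i N hi0 hiN le_rfl
    have hrest : dist (c i) (c N) ≤ dist (c 0) (c N) - (ρ - 2 * δ) := by linarith
    have hK_rest := mul_le_mul_of_nonneg_left hrest hK
    have ih_rest := ih (c i) (c N) (by push_cast at hxy; linarith)
    calc F (c 0) (c N) ≤ F (c 0) (c i) + F (c i) (c N) := htri _ _ _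
      _ ≤ dist (c 0) (c i) + a + ((1 + K) * dist (c i) (c N) + 2 * (a + δ)) :=
          add_le_add (hloc _ _ (by linarith)) ih_rest
      _ ≤ (1 + K) * dist (c 0) (c N) + 2 * (a + δ) := by linarith

section

variable {X Y : Type*} [MetricSpace X] [MetricSpace Y] {r δ : ℝ} {f : X → Y}

lemma dist_map_le_of_deltaIntrinsic (hδ : 0 < δ) (hr : 5 * δ < r) (hX : DeltaIntrinsic X δ)
    (hf : ∀ x y : X, min (dist x y) (dist (f x) (f y)) < r →
      |dist (f x) (f y) - dist x y| < δ) (x y : X) :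
    dist (f x) (f y) ≤ (1 + 20 * r⁻¹ * δ) * dist x y + 4 * δ := by
  have hr0 : 0 < r := by linarith
  have hu : r * (r⁻¹ * δ) = δ := by field_simp
  have hu5 : 5 * (r⁻¹ * δ) < 1 := by nlinarith
  have h := hX.le_mul_dist_add (ρ := r) (a := δ) (K := 20 * r⁻¹ * δ) hδ.le
    (by positivity) (by nlinarith) (fun x y => dist (f x) (f y)) (fun _ _ _ => dist_triangle _ _ _)
    (fun x y h => by linarith [(abs_lt.mp (hf x y (min_lt_iff.mpr (.inl h)))).2])
    x y
  linarith

lemma dist_le_map_of_deltaIntrinsic (hδ : 0 < δ) (hr : 5 * δ < r) (hY : DeltaIntrinsic Y δ)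
    (hnet : ∀ y : Y, ∃ x : X, dist (f x) y ≤ δ)
    (hf : ∀ x y : X, min (dist x y) (dist (f x) (f y)) < r →
      |dist (f x) (f y) - dist x y| < δ) (x y : X) :
    dist x y ≤ (1 + 20 * r⁻¹ * δ) * dist (f x) (f y) + 12 * δ := by
  choose g hg using hnet
  have hf_lower : ∀ x y, dist (f x) (f y) < r → dist x y < dist (f x) (f y) + δ := fun x y h => by
    linarith [(abs_lt.mp (hf x y (min_lt_iff.mpr (.inr h)))).1]
  have hgf : ∀ x, dist x (g (f x)) < 2 * δ := fun x => by
    have := hg (f x)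
    have := hf_lower x (g (f x)) (by rw [dist_comm]; linarith)
    rw [dist_comm (f x)] at this
    linarith
  have hg_loc : ∀ y₁ y₂, dist y₁ y₂ < r - 2 * δ → dist (g y₁) (g y₂) ≤ dist y₁ y₂ + 3 * δ := by
    intro y₁ y₂ h
    have hfg : dist (f (g y₁)) (f (g y₂)) ≤ dist y₁ y₂ + 2 * δ := by
      linarith [dist_triangle4 (f (g y₁)) y₁ y₂ (f (g y₂)), hg y₁, hg y₂,
        dist_comm (f (g y₂)) y₂]
    linarith [hf_lower (g y₁) (g y₂) (by linarith)]
  have hr0 : 0 < r := by linarith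
  have hu : r * (r⁻¹ * δ) = δ := by field_simp
  have hu5 : 5 * (r⁻¹ * δ) < 1 := by nlinarith
  -- `20 * r⁻¹ * δ * (r - 4 * δ) ≥ 4 * δ` is where `r ≥ 5 * δ` is needed.
  have hG := hY.le_mul_dist_add (ρ := r - 2 * δ) (a := 3 * δ) (K := 20 * r⁻¹ * δ)
    (by positivity) (by positivity) (by nlinarith) (fun y₁ y₂ => dist (g y₁) (g y₂))
    (fun _ _ _ => dist_triangle _ _ _) hg_loc (f x) (f y)
  linarith [dist_triangle4 x (g (f x)) (g (f y)) y, hgf x, hgf y, dist_comm y (g (f y))]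

end

/-- **Almost isometric at small scale implies quasi-isometric.**
There is a universal constant `C` such that: whenever `r > 5δ > 0`, `X` and `Y` are
`δ`-intrinsic metric spaces, and `f : X → Y` is a map such that `f(X)` is a `δ`-net in `Y`
and `|d(f x, f y) − d(x, y)| < δ` whenever `min{d(x,y), d(f x, f y)} < r`, then `f` is a
`(1 + C r⁻¹ δ, Cδ)`-quasi-isometry. -/
theorem stmt7 : ∃ C : ℝ, 0 < C ∧
    ∀ (X Y : Type) [MetricSpace X] [MetricSpace Y] (r δ : ℝ), 0 < δ → 5 * δ < r →
    DeltaIntrinsic X δ → DeltaIntrinsic Y δ →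
    ∀ f : X → Y,
      (∀ y : Y, ∃ x : X, dist (f x) y ≤ δ) →
      (∀ x y : X, min (dist x y) (dist (f x) (f y)) < r →
        |dist (f x) (f y) - dist x y| < δ) →
      (∀ y : Y, ∃ x : X, dist (f x) y ≤ C * δ) ∧
      (∀ x y : X, (1 + C * r⁻¹ * δ)⁻¹ * dist x y - C * δ < dist (f x) (f y) ∧
        dist (f x) (f y) < (1 + C * r⁻¹ * δ) * dist x y + C * δ) := by
  refine ⟨20, by norm_num, fun X Y _ _ r δ hδ hr hX hY f hnet hf => ⟨fun y => ?_, fun x y => ?_⟩⟩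
  · obtain ⟨x, hx⟩ := hnet y
    exact ⟨x, hx.trans (by linarith)⟩
  have hr0 : 0 < r := by linarith
  have hscale : 1 ≤ 1 + 20 * r⁻¹ * δ := le_add_of_nonneg_right (by positivity)
  have hlower := dist_le_map_of_deltaIntrinsic hδ hr hY hnet hf x y
  have hupper := dist_map_le_of_deltaIntrinsic hδ hr hX hf x y
  refine ⟨?_, by linarith⟩
  have : (1 + 20 * r⁻¹ * δ)⁻¹ * dist x y ≤ dist (f x) (f y) + 12 * δ := by
    rw [inv_mul_le_iff₀ (by linarith)]
    nlinarith
  linarith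
end

section
/- Let E be a Hilbert space, X ⊂ E, and suppose that for every x ∈ X there is an n-dimensional affine subspace A_x through x with d_H(X ∩ B_1(x), A_x ∩ B_1(x)) < δ, where δ is sufficiently small (depending on n). Then for any two points p, q ∈ X with |p − q| < 1: (a) dist(q, A_p) < δ, and (b) the angle between A_p and A_q satisfies sin ∠(A_p, A_q) ≤ 4δ/(1 − 4δ), hence ∠(A_p, A_q) < 5δ for δ small enough. -/
/-!
Chaining the two Hausdorff approximations through `X` shows that every point `a ∈ A p` with
`|a − p| ≤ 1` and `|a − q| ≤ 1 − δ` lies within `2δ` of `A q`. Applying this to the two points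
`m ± t v`, where `m ∈ A p` is the midpoint of `p` and a point of `A p` near `q`,
`t = 1/2 − 2δ` and `v` is a unit vector of the direction of `A p`, yields a vector of the direction
of `A q` within `2 · 2δ / 2t = 4δ / (1 − 4δ)` of `v`. The bound on the angle itself comes from
`sin x > x − x³/6`.
-/

open Metric

/-- `sin` of the (maximal principal) angle between two subspaces `V, W` of a Hilbert space:
the supremum over unit vectors `v ∈ V` of the distance from `v` to `W`. -/
noncomputable def sinAngle {E : Type*} [NormedAddCommGroup E] [InnerProductSpace ℝ E]
    (V W : Submodule ℝ E) : ℝ :=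
  sSup ((fun v => Metric.infDist v (W : Set E)) '' {v : E | v ∈ V ∧ ‖v‖ = 1})

theorem exists_dist_lt_of_hausdorffDist_inter_closedBall_lt {E : Type*} [PseudoMetricSpace E]
    {X Y : Set E} {c x : E} {r δ : ℝ} (hcY : c ∈ Y) (hxX : x ∈ X) (hxc : dist x c ≤ r)
    (h : hausdorffDist (X ∩ closedBall c r) (Y ∩ closedBall c r) < δ) :
    ∃ y ∈ Y, dist y c ≤ r ∧ dist x y < δ := by
  have hc : c ∈ Y ∩ closedBall c r := ⟨hcY, mem_closedBall_self (dist_nonneg.trans hxc)⟩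
  have hx : x ∈ X ∩ closedBall c r := ⟨hxX, hxc⟩
  have hfin := hausdorffEDist_ne_top_of_nonempty_of_bounded ⟨x, hx⟩ ⟨c, hc⟩
    (isBounded_closedBall.subset Set.inter_subset_right)
    (isBounded_closedBall.subset Set.inter_subset_right)
  obtain ⟨y, ⟨hyY, hyc⟩, hxy⟩ := exists_dist_lt_of_hausdorffDist_lt hx h hfin
  exact ⟨y, hyY, hyc, hxy⟩

theorem exists_mem_dist_lt_two_mul_of_hausdorffDist_lt {E : Type*} [PseudoMetricSpace E]
    {X P Q : Set E} {p q a : E} {r δ : ℝ} (hpX : p ∈ X) (hqQ : q ∈ Q)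
    (hP : hausdorffDist (X ∩ closedBall p r) (P ∩ closedBall p r) < δ)
    (hQ : hausdorffDist (X ∩ closedBall q r) (Q ∩ closedBall q r) < δ)
    (haP : a ∈ P) (hap : dist a p ≤ r) (haq : dist a q ≤ r - δ) :
    ∃ b ∈ Q, dist a b < 2 * δ := by
  rw [hausdorffDist_comm] at hP
  obtain ⟨x, hxX, -, hax⟩ := exists_dist_lt_of_hausdorffDist_inter_closedBall_lt hpX haP hap hP
  have hxq : dist x q ≤ r := by linarith [dist_triangle x a q, dist_comm x a]
  obtain ⟨b, hbQ, -, hxb⟩ := exists_dist_lt_of_hausdorffDist_inter_closedBall_lt hqQ hxX hxq hQ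
  exact ⟨b, hbQ, by linarith [dist_triangle a x b]⟩

section Direction

variable {E : Type*} [NormedAddCommGroup E] [NormedSpace ℝ E]

theorem infDist_direction_le_of_sub_eq_smul {W : AffineSubspace ℝ E} {x y b c v : E} {s ε : ℝ}
    (hs : 0 < s) (hxy : x - y = s • v) (hb : b ∈ W) (hc : c ∈ W)
    (hxb : dist x b ≤ ε) (hyc : dist y c ≤ ε) :
    infDist v (W.direction : Set E) ≤ 2 * ε / s := by
  have hw : s⁻¹ • (b - c) ∈ W.direction :=
    W.direction.smul_mem _ (W.vsub_mem_direction hb hc)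
  have hv : v = s⁻¹ • (x - y) := by rw [hxy, smul_smul, inv_mul_cancel₀ hs.ne', one_smul]
  have hvw : v - s⁻¹ • (b - c) = s⁻¹ • ((x - b) - (y - c)) := by
    rw [hv, ← smul_sub]; congr 1; abel
  calc infDist v (W.direction : Set E) ≤ dist v (s⁻¹ • (b - c)) := infDist_le_dist_of_mem hw
    _ = s⁻¹ * ‖(x - b) - (y - c)‖ := by
      rw [dist_eq_norm, hvw, norm_smul, Real.norm_of_nonneg (inv_nonneg.2 hs.le)]
    _ ≤ s⁻¹ * (ε + ε) := by
      rw [dist_eq_norm] at hxb hyc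
      gcongr
      exact norm_sub_le_of_le hxb hyc
    _ = 2 * ε / s := by ring

theorem infDist_direction_le_of_hausdorffDist_lt {X : Set E} {P Q : AffineSubspace ℝ E}
    {p q v : E} {r δ : ℝ} (hpX : p ∈ X) (hqX : q ∈ X) (hpP : p ∈ P) (hqQ : q ∈ Q)
    (hpq : dist p q ≤ r) (hδr : 4 * δ < r)
    (hP : hausdorffDist (X ∩ closedBall p r) ((P : Set E) ∩ closedBall p r) < δ)
    (hQ : hausdorffDist (X ∩ closedBall q r) ((Q : Set E) ∩ closedBall q r) < δ)
    (hv : v ∈ P.direction) (hv1 : ‖v‖ = 1) :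
    infDist v (Q.direction : Set E) ≤ 4 * δ / (r - 4 * δ) := by
  obtain ⟨q', hq'P, -, hqq'⟩ :=
    exists_dist_lt_of_hausdorffDist_inter_closedBall_lt hpP hqX (by rwa [dist_comm]) hP
  have hδ : 0 ≤ δ := dist_nonneg.trans hqq'.le
  set m := midpoint ℝ p q'
  have hmP : m ∈ P := P.convex.midpoint_mem hpP hq'P
  have hmp : dist m p ≤ (r + δ) / 2 := by
    have := dist_midpoint_midpoint_le p q' p p
    rw [midpoint_self, dist_self] at this
    linarith [dist_triangle q' q p, dist_comm q q', dist_comm p q]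
  have hmq : dist m q ≤ (r + δ) / 2 := by
    have := dist_midpoint_midpoint_le p q' q q
    rw [midpoint_self] at this
    linarith [dist_comm q q']
  set t := r / 2 - 2 * δ with ht
  have htpos : 0 < t := by linarith
  have hprobe : ∀ s : ℝ, |s| = t → ∃ b ∈ Q, dist (s • v + m) b < 2 * δ := by
    intro s hs
    have hsv : ‖s • v‖ = t := by rw [norm_smul, hv1, Real.norm_eq_abs, hs, mul_one]
    have hfar : ∀ c, dist m c ≤ (r + δ) / 2 → dist (s • v + m) c ≤ r - δ := fun c hc =>
      calc dist (s • v + m) c ≤ dist (s • v + m) m + dist m c := dist_triangle _ _ _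
        _ ≤ r - δ := by rw [dist_add_self_left, hsv]; linarith
    exact exists_mem_dist_lt_two_mul_of_hausdorffDist_lt hpX hqQ hP hQ
      (P.vadd_mem_of_mem_direction (P.direction.smul_mem s hv) hmP)
      ((hfar p hmp).trans (by linarith)) (hfar q hmq)
  obtain ⟨b₁, hb₁Q, hb₁⟩ := hprobe t (abs_of_pos htpos)
  obtain ⟨b₂, hb₂Q, hb₂⟩ := hprobe (-t) (by rw [abs_neg, abs_of_pos htpos])
  have hsub : (t • v + m) - ((-t) • v + m) = (2 * t) • v := by module
  calc infDist v (Q.direction : Set E) ≤ 2 * (2 * δ) / (2 * t) :=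
        infDist_direction_le_of_sub_eq_smul (by positivity) hsub hb₁Q hb₂Q hb₁.le hb₂.le
    _ = 4 * δ / (r - 4 * δ) := by rw [ht]; field_simp; ring

end Direction

theorem sinAngle_le {E : Type*} [NormedAddCommGroup E] [InnerProductSpace ℝ E]
    {V W : Submodule ℝ E} {c : ℝ} (hc : 0 ≤ c)
    (h : ∀ v ∈ V, ‖v‖ = 1 → infDist v (W : Set E) ≤ c) : sinAngle V W ≤ c :=
  Real.sSup_le (by rintro _ ⟨v, ⟨hv, hv1⟩, rfl⟩; exact h v hv hv1) hc

open Real in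
theorem Real.arcsin_four_mul_div_lt {δ : ℝ} (hδ : 0 < δ) (hδ₀ : δ < 1 / 25) :
    arcsin (4 * δ / (1 - 4 * δ)) < 5 * δ := by
  have h5δ : 5 * δ ∈ Set.Ioc (-(π / 2)) (π / 2) :=
    ⟨by linarith [pi_pos], by linarith [pi_gt_three]⟩
  rw [arcsin_lt_iff_lt_sin' h5δ]
  refine lt_of_le_of_lt ?_ (sin_gt_sub_cube (by positivity))
  rw [div_le_iff₀ (by linarith)]
  nlinarith [mul_pos hδ hδ, mul_pos (mul_pos hδ hδ) hδ, mul_pos hδ (sub_pos.2 hδ₀),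
    mul_pos (mul_pos hδ hδ) (sub_pos.2 hδ₀)]

/-- **Nearby approximating affine planes are almost parallel.**
For every `n` there is `δ₀ > 0` such that: if `X` is a subset of a Hilbert space `E` and for
every `x ∈ X` there is an `n`-dimensional affine subspace `A x` through `x` with
`d_H(X ∩ B₁(x), A x ∩ B₁(x)) < δ` (`0 < δ < δ₀`), then for all `p, q ∈ X` with `|p − q| < 1`:
(a) `dist(q, A p) < δ`, and (b) `sin ∠(A p, A q) ≤ 4δ/(1 − 4δ)`, hence `∠(A p, A q) < 5δ`. -/
theorem stmt8 (n : ℕ) : ∃ δ₀ : ℝ, 0 < δ₀ ∧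
    ∀ (E : Type) [NormedAddCommGroup E] [InnerProductSpace ℝ E]
      (X : Set E) (A : E → AffineSubspace ℝ E) (δ : ℝ), 0 < δ → δ < δ₀ →
      (∀ x ∈ X, x ∈ A x ∧ Module.finrank ℝ (A x).direction = n ∧
        Metric.hausdorffDist (X ∩ Metric.closedBall x 1)
          ((A x : Set E) ∩ Metric.closedBall x 1) < δ) →
      ∀ p ∈ X, ∀ q ∈ X, dist p q < 1 →
        Metric.infDist q (A p : Set E) < δ ∧
        sinAngle (A p).direction (A q).direction ≤ 4 * δ / (1 - 4 * δ) ∧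
        Real.arcsin (sinAngle (A p).direction (A q).direction) < 5 * δ := by
  refine ⟨1 / 25, by norm_num, ?_⟩
  intro E _ _ X A δ hδ hδ₀ hA p hp q hq hpq
  obtain ⟨hpA, -, hp₁⟩ := hA p hp
  obtain ⟨hqA, -, hq₁⟩ := hA q hq
  have hqp : dist q p ≤ 1 := (dist_comm q p).trans_le hpq.le
  obtain ⟨q', hq'A, -, hqq'⟩ := exists_dist_lt_of_hausdorffDist_inter_closedBall_lt hpA hq hqp hp₁
  have hsin : sinAngle (A p).direction (A q).direction ≤ 4 * δ / (1 - 4 * δ) :=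
    sinAngle_le (div_nonneg (by linarith) (by linarith)) fun v hv hv1 =>
      infDist_direction_le_of_hausdorffDist_lt hp hq hpA hqA hpq.le (by linarith) hp₁ hq₁ hv hv1
  exact ⟨(infDist_le_dist_of_mem hq'A).trans_lt hqq', hsin,
    (Real.monotone_arcsin hsin).trans_lt (Real.arcsin_four_mul_div_lt hδ hδ₀)⟩
end

section
/- Let Z₁, Z₂ ⊂ R^n be sets with B_{1/3}(0) ⊂ Z_i ⊂ B_2(0), and let Y be a metric space with Cδ-isometries h₁ : Y → Z₁ and h₂ : Y → Z₂ satisfying h₁(x₀) = h₂(x₀) = 0 for some x₀ ∈ Y. Then there exists an orthogonal linear map U : R^n → R^n and a constant C' = C'(n) such that |U(h₁(x)) − h₂(x)| < C'δ for all x ∈ Y. -/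
/-!
Polarization at the common base point `x₀` shows that `h₁` and `h₂` have the same inner
products up to `O(δ)`. As `h₁` is a `δ`-net of a set containing `B_{1/3}(0)`, there are points
`yᵢ` with `4 h₁(yᵢ) ≈ eᵢ`; hence the vectors `4 h₂(yᵢ)` are almost orthonormal, and Gram–Schmidt
moves them by `O(7ⁿ δ)` to an orthonormal basis `(uᵢ)`. The orthogonal map `U eᵢ = uᵢ` works: the
`i`-th coordinate of `U(h₁ x) - h₂ x` in the basis `u` is
`⟪eᵢ, h₁ x⟫ - ⟪uᵢ, h₂ x⟫ ≈ 4 ⟪h₁ yᵢ, h₁ x⟫ - 4 ⟪h₂ yᵢ, h₂ x⟫ = O(7ⁿ δ)`.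
When `δ` is too large for this, any `U` works since both images lie in `B₂(0)`.
-/

open Finset InnerProductSpace RealInnerProductSpace

variable {E F : Type*} [NormedAddCommGroup E] [InnerProductSpace ℝ E]
  [NormedAddCommGroup F] [InnerProductSpace ℝ F]

lemma abs_sq_sub_sq_le {a b M e : ℝ} (ha : 0 ≤ a) (hb : 0 ≤ b) (haM : a ≤ M) (hbM : b ≤ M)
    (h : |a - b| ≤ e) : |a ^ 2 - b ^ 2| ≤ 2 * M * e := by
  rw [sq_sub_sq, abs_mul, abs_of_nonneg (add_nonneg ha hb)]
  exact mul_le_mul (by linarith) h (abs_nonneg _) (by linarith)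

lemma abs_inner_sub_inner_le_of_abs_norm_sub_le {a b : E} {a' b' : F} {R η : ℝ}
    (ha : ‖a‖ ≤ R) (hb : ‖b‖ ≤ R) (ha' : ‖a'‖ ≤ R) (hb' : ‖b'‖ ≤ R)
    (hna : |‖a‖ - ‖a'‖| ≤ η) (hnb : |‖b‖ - ‖b'‖| ≤ η) (hnab : |‖a - b‖ - ‖a' - b'‖| ≤ η) :
    |⟪a, b⟫ - ⟪a', b'⟫| ≤ 4 * R * η := by
  have hab : ‖a - b‖ ≤ 2 * R := (norm_sub_le a b).trans (by linarith)
  have hab' : ‖a' - b'‖ ≤ 2 * R := (norm_sub_le a' b').trans (by linarith)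
  have h₁ := abs_le.1 (abs_sq_sub_sq_le (norm_nonneg _) (norm_nonneg _) ha ha' hna)
  have h₂ := abs_le.1 (abs_sq_sub_sq_le (norm_nonneg _) (norm_nonneg _) hb hb' hnb)
  have h₃ := abs_le.1 (abs_sq_sub_sq_le (norm_nonneg _) (norm_nonneg _) hab hab' hnab)
  have := norm_sub_sq_real a b
  have := norm_sub_sq_real a' b'
  rw [abs_le]
  constructor <;> linarith

lemma abs_inner_sub_inner_le_of_pointed_distortion {Y : Type*} [PseudoMetricSpace Y]
    {f : Y → E} {g : Y → F} {x₀ : Y} {R δ : ℝ} (hf₀ : f x₀ = 0) (hg₀ : g x₀ = 0)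
    (hfR : ∀ x, ‖f x‖ ≤ R) (hgR : ∀ x, ‖g x‖ ≤ R)
    (hf : ∀ x y, |dist (f x) (f y) - dist x y| < δ)
    (hg : ∀ x y, |dist (g x) (g y) - dist x y| < δ) (x y : Y) :
    |⟪f x, f y⟫ - ⟪g x, g y⟫| ≤ 8 * R * δ := by
  have hfg : ∀ x y, |dist (f x) (f y) - dist (g x) (g y)| ≤ 2 * δ := fun x y ↦ by
    have := abs_sub_le (dist (f x) (f y)) (dist x y) (dist (g x) (g y))
    rw [abs_sub_comm (dist x y)] at this
    linarith [hf x y, hg x y]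
  have hnorm : ∀ x, |‖f x‖ - ‖g x‖| ≤ 2 * δ := fun x ↦ by
    simpa [hf₀, hg₀, dist_eq_norm] using hfg x x₀
  have := abs_inner_sub_inner_le_of_abs_norm_sub_le (hfR x) (hfR y) (hgR x) (hgR y)
    (hnorm x) (hnorm y) (by simpa [dist_eq_norm] using hfg x y)
  linarith

lemma norm_inv_norm_smul_sub_le {V : Type*} [NormedAddCommGroup V] [NormedSpace ℝ V] (v w : V) :
    ‖‖v‖⁻¹ • v - w‖ ≤ |1 - ‖w‖| + 2 * ‖v - w‖ := by
  by_cases hv : v = 0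
  · simp only [hv, smul_zero, zero_sub, norm_neg]
    linarith [abs_nonneg (1 - ‖w‖), norm_nonneg w]
  have hvv : ‖‖v‖⁻¹ • v - v‖ = |1 - ‖v‖| := by
    have hv' : ‖v‖ ≠ 0 := norm_ne_zero_iff.2 hv
    rw [show ‖v‖⁻¹ • v - v = (‖v‖⁻¹ - 1) • v by rw [sub_smul, one_smul], norm_smul,
      Real.norm_eq_abs, ← abs_norm v, ← abs_mul, abs_norm, sub_mul, inv_mul_cancel₀ hv', one_mul]
  have hvw : |1 - ‖v‖| ≤ |1 - ‖w‖| + ‖v - w‖ := by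
    have := abs_sub_le 1 ‖w‖ ‖v‖
    linarith [abs_norm_sub_norm_le w v, norm_sub_rev w v]
  calc ‖‖v‖⁻¹ • v - w‖ ≤ ‖‖v‖⁻¹ • v - v‖ + ‖v - w‖ := norm_sub_le_norm_sub_add_norm_sub _ _ _
    _ ≤ |1 - ‖w‖| + 2 * ‖v - w‖ := by linarith

lemma norm_starProjection_singleton (v x : E) :
    ‖(ℝ ∙ v).starProjection x‖ = |⟪‖v‖⁻¹ • v, x⟫| := by
  simp only [Submodule.starProjection_singleton, norm_smul, real_inner_smul_left,
    Real.norm_eq_abs, Real.ringHom_apply, abs_div, abs_mul, abs_inv, abs_pow, abs_norm]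
  rcases eq_or_ne ‖v‖ 0 with hv | hv
  · simp [hv]
  · field_simp

lemma norm_gramSchmidt_sub_le {ι : Type*} [LinearOrder ι] [LocallyFiniteOrderBot ι]
    [WellFoundedLT ι] (w : ι → E) (i : ι) :
    ‖gramSchmidt ℝ w i - w i‖ ≤ ∑ j ∈ Iio i, |⟪gramSchmidtNormed ℝ w j, w i⟫| := by
  rw [gramSchmidt_def, sub_sub_cancel_left, norm_neg]
  refine (norm_sum_le _ _).trans (sum_le_sum fun j _ ↦ ?_)
  rw [norm_starProjection_singleton]
  rfl

lemma Fin.sum_Iio_eq_sum_range {M : Type*} [AddCommMonoid M] {n : ℕ} (f : ℕ → M) (i : Fin n) :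
    ∑ j ∈ Iio i, f j = ∑ k ∈ range i, f k := by
  rw [← Nat.Iio_eq_range, ← Fin.map_valEmbedding_Iio, sum_map]
  rfl

variable {ι : Type*} [DecidableEq ι] {ε : ℝ} {w : ι → E}

def AlmostOrthonormal (ε : ℝ) (w : ι → E) : Prop :=
  ∀ i j, |⟪w i, w j⟫ - if i = j then 1 else 0| ≤ ε

namespace AlmostOrthonormal

lemma mono {ε' : ℝ} (hw : AlmostOrthonormal ε w) (h : ε ≤ ε') : AlmostOrthonormal ε' w :=
  fun i j ↦ (hw i j).trans h

lemma abs_norm_sub_one_le (hw : AlmostOrthonormal ε w) (i : ι) : |‖w i‖ - 1| ≤ ε := by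
  have h := hw i i
  rw [if_pos rfl, real_inner_self_eq_norm_sq] at h
  calc |‖w i‖ - 1| ≤ |‖w i‖ - 1| * (‖w i‖ + 1) :=
        le_mul_of_one_le_right (abs_nonneg _) (by linarith [norm_nonneg (w i)])
    _ = |‖w i‖ ^ 2 - 1| := by
        rw [show ‖w i‖ ^ 2 - 1 = (‖w i‖ - 1) * (‖w i‖ + 1) by ring, abs_mul,
          abs_of_pos (by positivity : (0:ℝ) < ‖w i‖ + 1)]
    _ ≤ ε := h

lemma norm_le_two (hw : AlmostOrthonormal ε w) (hε : ε ≤ 1) (i : ι) : ‖w i‖ ≤ 2 := by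
  linarith [(abs_le.1 (hw.abs_norm_sub_one_le i)).2]

lemma of_norm_sub_le {a b : ι → F} {R η : ℝ} (hb : Orthonormal ℝ b)
    (hab : ∀ i, ‖a i - b i‖ ≤ ε) (ha : ∀ i, ‖a i‖ ≤ R)
    (hwa : ∀ i j, |⟪w i, w j⟫ - ⟪a i, a j⟫| ≤ η) :
    AlmostOrthonormal (η + (R + 1) * ε) w := by
  intro i j
  have hab_inner : |⟪a i, a j⟫ - ⟪b i, b j⟫| ≤ (R + 1) * ε := by
    rw [show ⟪a i, a j⟫ - ⟪b i, b j⟫ = ⟪a i - b i, a j⟫ + ⟪b i, a j - b j⟫ by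
      rw [inner_sub_left, inner_sub_right]; ring]
    have h₁ := (abs_real_inner_le_norm (a i - b i) (a j)).trans
      (mul_le_mul (hab i) (ha j) (norm_nonneg _) ((norm_nonneg _).trans (hab i)))
    have h₂ := abs_real_inner_le_norm (b i) (a j - b j)
    rw [hb.1 i, one_mul] at h₂
    linarith [abs_add_le ⟪a i - b i, a j⟫ ⟪b i, a j - b j⟫, hab j]
  rw [← orthonormal_iff_ite.1 hb i j]
  calc |⟪w i, w j⟫ - ⟪b i, b j⟫|
      ≤ |⟪w i, w j⟫ - ⟪a i, a j⟫| + |⟪a i, a j⟫ - ⟪b i, b j⟫| := abs_sub_le _ _ _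
    _ ≤ η + (R + 1) * ε := add_le_add (hwa i j) hab_inner

variable {n : ℕ} {v : Fin n → E}

lemma norm_gramSchmidtNormed_sub_le (hv : AlmostOrthonormal ε v) (hε : ε ≤ 1) (i : Fin n) :
    ‖gramSchmidtNormed ℝ v i - v i‖ ≤ 7 ^ (i : ℕ) * ε := by
  -- Writing `eᵢ` for the left-hand side, the Gram–Schmidt recursion gives
  -- `eᵢ ≤ (1 + 2i) ε + 4 ∑_{j<i} eⱼ`, and `7ⁱ ε` dominates this since `6i + 1 ≤ 7ⁱ`.
  induction i using WellFoundedLT.induction with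
  | _ i ih =>
  have hε₀ : 0 ≤ ε := (abs_nonneg _).trans (hv i i)
  have hinner : ∀ j ∈ Iio i, |⟪gramSchmidtNormed ℝ v j, v i⟫| ≤ ε + 2 * (7 ^ (j : ℕ) * ε) := by
    intro j hj
    have hji : j ≠ i := (mem_Iio.1 hj).ne
    have h₁ : |⟪v j, v i⟫| ≤ ε := by simpa [hji] using hv j i
    have h₂ := (abs_real_inner_le_norm (gramSchmidtNormed ℝ v j - v j) (v i)).trans
      (mul_le_mul (ih j (mem_Iio.1 hj)) (hv.norm_le_two hε i) (norm_nonneg _) (by positivity))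
    rw [inner_sub_left] at h₂
    linarith [abs_sub_abs_le_abs_sub ⟪gramSchmidtNormed ℝ v j, v i⟫ ⟪v j, v i⟫]
  have hsum : ∑ j ∈ Iio i, (ε + 2 * (7 ^ (j : ℕ) * ε)) = (i + (7 ^ (i : ℕ) - 1) / 3) * ε := by
    rw [sum_add_distrib, ← mul_sum, ← sum_mul, Fin.sum_Iio_eq_sum_range (7 ^ ·),
      geom_sum_eq (by norm_num), sum_const, Fin.card_Iio, nsmul_eq_mul]
    ring
  have hpow : 1 + (i : ℕ) * (6 : ℝ) ≤ 7 ^ (i : ℕ) := by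
    have := one_add_mul_le_pow (by norm_num : (-2 : ℝ) ≤ 6) (i : ℕ)
    norm_num at this ⊢
    exact this
  calc ‖gramSchmidtNormed ℝ v i - v i‖
      ≤ |1 - ‖v i‖| + 2 * ‖gramSchmidt ℝ v i - v i‖ := by
        simpa [gramSchmidtNormed] using norm_inv_norm_smul_sub_le (gramSchmidt ℝ v i) (v i)
    _ ≤ ε + 2 * ((i + (7 ^ (i : ℕ) - 1) / 3) * ε) := by
        rw [abs_sub_comm, ← hsum]
        gcongr
        · exact hv.abs_norm_sub_one_le i
        · exact (norm_gramSchmidt_sub_le v i).trans (sum_le_sum hinner)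
    _ ≤ 7 ^ (i : ℕ) * ε := by nlinarith

lemma exists_orthonormalBasis_norm_sub_le [FiniteDimensional ℝ E] (hE : Module.finrank ℝ E = n)
    (hv : AlmostOrthonormal ε v) (hε : 2 * 7 ^ n * ε < 1) :
    ∃ u : OrthonormalBasis (Fin n) ℝ E, ∀ i, ‖u i - v i‖ ≤ 7 ^ n * ε := by
  have h7 : (1 : ℝ) ≤ 7 ^ n := one_le_pow₀ (by norm_num)
  have hε₁ : ε ≤ 1 := by nlinarith
  have hclose : ∀ i, ‖gramSchmidtNormed ℝ v i - v i‖ ≤ 7 ^ n * ε := fun i ↦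
    (hv.norm_gramSchmidtNormed_sub_le hε₁ i).trans <| mul_le_mul_of_nonneg_right
      (pow_le_pow_right₀ (by norm_num) i.2.le) ((abs_nonneg _).trans (hv i i))
  have hne : ∀ i, gramSchmidtNormed ℝ v i ≠ 0 := by
    intro i h
    have hvi := hclose i
    rw [h, zero_sub, norm_neg] at hvi
    have hε₀ : 0 ≤ ε := (abs_nonneg _).trans (hv i i)
    linarith [(abs_le.1 (hv.abs_norm_sub_one_le i)).1, mul_le_mul_of_nonneg_right h7 hε₀]
  refine ⟨gramSchmidtOrthonormalBasis (by simp [hE]) v, fun i ↦ ?_⟩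
  rw [gramSchmidtOrthonormalBasis_apply _ (hne i)]
  exact hclose i

end AlmostOrthonormal

namespace OrthonormalBasis

variable {ι : Type*} [Fintype ι]

lemma norm_le_of_abs_inner_le (u : OrthonormalBasis ι ℝ F) {x : F} {c : ℝ}
    (h : ∀ i, |⟪u i, x⟫| ≤ c) : ‖x‖ ≤ √(Fintype.card ι) * c := by
  rcases isEmpty_or_nonempty ι with hι | ⟨⟨i⟩⟩
  · have hx : ‖x‖ ^ 2 = 0 := by simp [← u.sum_sq_inner_right x]
    simp_all
  have hsq : ‖x‖ ^ 2 ≤ (√(Fintype.card ι) * c) ^ 2 := by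
    rw [← u.sum_sq_inner_right, mul_pow, Real.sq_sqrt (Nat.cast_nonneg _), ← nsmul_eq_mul,
      ← card_univ, ← sum_const]
    exact sum_le_sum fun i _ ↦ sq_le_sq' (abs_le.1 (h i)).1 (abs_le.1 (h i)).2
  have hc : 0 ≤ c := (abs_nonneg _).trans (h i)
  exact (pow_le_pow_iff_left₀ (norm_nonneg _) (by positivity) two_ne_zero).1 hsq

lemma norm_equiv_apply_sub_le (b : OrthonormalBasis ι ℝ E) (u : OrthonormalBasis ι ℝ F)
    {a : ι → E} {w : ι → F} {p : E} {q : F} {R ε ε' η : ℝ}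
    (hp : ‖p‖ ≤ R) (hq : ‖q‖ ≤ R) (ha : ∀ i, ‖a i - b i‖ ≤ ε) (hw : ∀ i, ‖w i - u i‖ ≤ ε')
    (hpq : ∀ i, |⟪a i, p⟫ - ⟪w i, q⟫| ≤ η) :
    ‖b.equiv u (Equiv.refl ι) p - q‖ ≤ √(Fintype.card ι) * (R * (ε + ε') + η) := by
  refine u.norm_le_of_abs_inner_le fun i ↦ ?_
  have hcoord : ⟪u i, b.equiv u (Equiv.refl ι) p - q⟫
      = -⟪a i - b i, p⟫ + (⟪a i, p⟫ - ⟪w i, q⟫) + ⟪w i - u i, q⟫ := by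
    have hui : u i = b.equiv u (Equiv.refl ι) (b i) := (b.equiv_apply_basis u (Equiv.refl ι) i).symm
    rw [hui, inner_sub_right, LinearIsometryEquiv.inner_map_map, ← hui, inner_sub_left,
      inner_sub_left]
    ring
  have hp' := (abs_real_inner_le_norm (a i - b i) p).trans
    (mul_le_mul (ha i) hp (norm_nonneg _) ((norm_nonneg _).trans (ha i)))
  have hq' := (abs_real_inner_le_norm (w i - u i) q).trans
    (mul_le_mul (hw i) hq (norm_nonneg _) ((norm_nonneg _).trans (hw i)))
  rw [hcoord]
  calc |-⟪a i - b i, p⟫ + (⟪a i, p⟫ - ⟪w i, q⟫) + ⟪w i - u i, q⟫|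
      ≤ |⟪a i - b i, p⟫| + |⟪a i, p⟫ - ⟪w i, q⟫| + |⟪w i - u i, q⟫| := by
        have := abs_add_three (-⟪a i - b i, p⟫) (⟪a i, p⟫ - ⟪w i, q⟫) ⟪w i - u i, q⟫
        rwa [abs_neg] at this
    _ ≤ R * (ε + ε') + η := by linarith [hpq i]

end OrthonormalBasis

lemma exists_linearIsometryEquiv_norm_sub_le [FiniteDimensional ℝ F] {n : ℕ}
    (hF : Module.finrank ℝ F = n) (b : OrthonormalBasis (Fin n) ℝ E) {Y : Type*}
    {f : Y → E} {g : Y → F} {R c ε η : ℝ} (hc : 0 ≤ c)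
    (hf : ∀ x, ‖f x‖ ≤ R) (hg : ∀ x, ‖g x‖ ≤ R) (hfg : ∀ x y, |⟪f x, f y⟫ - ⟪g x, g y⟫| ≤ η)
    (hframe : ∀ i, ∃ y, ‖c • f y - b i‖ ≤ ε)
    (hsmall : 2 * 7 ^ n * (c ^ 2 * η + (c * R + 1) * ε) < 1) :
    ∃ U : E ≃ₗᵢ[ℝ] F, ∀ x, ‖U (f x) - g x‖ ≤
      √n * (R * (ε + 7 ^ n * (c ^ 2 * η + (c * R + 1) * ε)) + c * η) := by
  choose y hy using hframe
  have hw : AlmostOrthonormal (c ^ 2 * η + (c * R + 1) * ε) fun i ↦ c • g (y i) := by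
    refine AlmostOrthonormal.of_norm_sub_le b.orthonormal hy (fun i ↦ ?_) (fun i j ↦ ?_)
    · rw [norm_smul, Real.norm_of_nonneg hc]
      exact mul_le_mul_of_nonneg_left (hf (y i)) hc
    · rw [real_inner_smul_left, real_inner_smul_right, real_inner_smul_left,
        real_inner_smul_right, ← mul_sub, ← mul_sub, ← mul_assoc, abs_mul, abs_sub_comm, ← sq,
        abs_of_nonneg (sq_nonneg c)]
      exact mul_le_mul_of_nonneg_left (hfg (y i) (y j)) (sq_nonneg c)
  obtain ⟨u, hu⟩ := hw.exists_orthonormalBasis_norm_sub_le hF hsmall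
  refine ⟨b.equiv u (Equiv.refl _), fun x ↦ ?_⟩
  have hcoord : ∀ i, |⟪c • f (y i), f x⟫ - ⟪c • g (y i), g x⟫| ≤ c * η := fun i ↦ by
    rw [real_inner_smul_left, real_inner_smul_left, ← mul_sub, abs_mul, abs_of_nonneg hc]
    exact mul_le_mul_of_nonneg_left (hfg (y i) x) hc
  simpa using b.norm_equiv_apply_sub_le u (hf x) (hg x) hy
    (fun i ↦ (norm_sub_rev _ _).trans_le (hu i)) hcoord

/-- **Two pointed almost-isometric images of the same space differ by an orthogonal map.**
For every `n` there is a constant `C' = C'(n) > 0 with the following property.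
Let `Z₁, Z₂ ⊆ ℝⁿ` satisfy `B_{1/3}(0) ⊆ Zᵢ ⊆ B₂(0)`, let `Y` be a metric space with
`δ`-isometries `h₁ : Y → Z₁` and `h₂ : Y → Z₂` (images are `δ`-nets and distances are
distorted by less than `δ`) such that `h₁(x₀) = h₂(x₀) = 0` for some `x₀ ∈ Y`.  Then there
is an orthogonal linear map `U : ℝⁿ → ℝⁿ` with `|U(h₁ x) − h₂ x| < C'·δ` for all `x ∈ Y`. -/
theorem stmt12 (n : ℕ) : ∃ C' : ℝ, 0 < C' ∧
    ∀ (Y : Type) [MetricSpace Y] (δ : ℝ), 0 < δ →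
    ∀ (Z₁ Z₂ : Set (EuclideanSpace ℝ (Fin n))),
      Metric.closedBall 0 (1 / 3) ⊆ Z₁ → Z₁ ⊆ Metric.closedBall 0 2 →
      Metric.closedBall 0 (1 / 3) ⊆ Z₂ → Z₂ ⊆ Metric.closedBall 0 2 →
    ∀ (h₁ h₂ : Y → EuclideanSpace ℝ (Fin n)) (x₀ : Y),
      (∀ x : Y, h₁ x ∈ Z₁) → (∀ x : Y, h₂ x ∈ Z₂) →
      (∀ x y : Y, |dist (h₁ x) (h₁ y) - dist x y| < δ) →
      (∀ x y : Y, |dist (h₂ x) (h₂ y) - dist x y| < δ) →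
      (∀ z ∈ Z₁, ∃ x : Y, dist (h₁ x) z < δ) →
      (∀ z ∈ Z₂, ∃ x : Y, dist (h₂ x) z < δ) →
      h₁ x₀ = 0 → h₂ x₀ = 0 →
      ∃ U : EuclideanSpace ℝ (Fin n) ≃ₗᵢ[ℝ] EuclideanSpace ℝ (Fin n),
        ∀ x : Y, dist (U (h₁ x)) (h₂ x) < C' * δ := by
  refine ⟨(√n + 4) * (72 + 584 * 7 ^ n), by positivity, ?_⟩
  intro Y _ δ hδ Z₁ Z₂ hB₁ hZ₁ _ hZ₂ h₁ h₂ x₀ hh₁ hh₂ hd₁ hd₂ hnet₁ _ h₁x₀ h₂x₀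
  have hn₁ : ∀ x, ‖h₁ x‖ ≤ 2 := fun x ↦ mem_closedBall_zero_iff.1 (hZ₁ (hh₁ x))
  have hn₂ : ∀ x, ‖h₂ x‖ ≤ 2 := fun x ↦ mem_closedBall_zero_iff.1 (hZ₂ (hh₂ x))
  have hC : 0 < (72 + 584 * 7 ^ n) * δ := by positivity
  have hC' := mul_nonneg (Real.sqrt_nonneg n) hC.le
  by_cases hsmall : 584 * 7 ^ n * δ < 1
  swap
  · refine ⟨LinearIsometryEquiv.refl ℝ _, fun x ↦ ?_⟩
    calc dist (h₁ x) (h₂ x) ≤ ‖h₁ x‖ + ‖h₂ x‖ := dist_le_norm_add_norm _ _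
      _ < 4 * ((72 + 584 * 7 ^ n) * δ) := by linarith [hn₁ x, hn₂ x, not_lt.1 hsmall]
      _ ≤ _ := by linarith
  set b := EuclideanSpace.basisFun (Fin n) ℝ
  have hframe : ∀ i, ∃ y, ‖(4 : ℝ) • h₁ y - b i‖ ≤ 4 * δ := fun i ↦ by
    obtain ⟨y, hy⟩ := hnet₁ ((4 : ℝ)⁻¹ • b i) <| hB₁ <| by
      rw [mem_closedBall_zero_iff, norm_smul, b.orthonormal.1 i]
      norm_num
    refine ⟨y, ?_⟩
    rw [← smul_inv_smul₀ (by norm_num : (4 : ℝ) ≠ 0) (b i), ← smul_sub, norm_smul,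
      ← dist_eq_norm, Real.norm_of_nonneg (by norm_num)]
    linarith
  obtain ⟨U, hU⟩ := exists_linearIsometryEquiv_norm_sub_le finrank_euclideanSpace_fin b
    (by norm_num : (0 : ℝ) ≤ 4) hn₁ hn₂
    (abs_inner_sub_inner_le_of_pointed_distortion h₁x₀ h₂x₀ hn₁ hn₂ hd₁ hd₂) hframe
    (by linarith)
  refine ⟨U, fun x ↦ (dist_eq_norm _ _).trans_lt ((hU x).trans_lt ?_)⟩
  linarith
end

section
/- Suppose X₀ = {q_i} is a net in a metric space X, with 2δ-isometries f_i : B_1(q_i) → B_1(p_i) ⊂ R^n sending q_i to p_i, and affine isometries A_{ij} of R^n satisfying |A_{ij}(f_i(x)) − f_j(x)| < Cδ for all x ∈ B_1(q_i) ∩ B_1(q_j) (for adjacent pairs). Then for three pairwise adjacent points q_i, q_j, q_k and all x in the ball D_i = B_1(p_i): |A_{jk}(A_{ij}(x)) − A_{ik}(x)| < C'δ, where C' depends only on n. That is, the transition maps satisfy an approximate cocycle condition. -/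
/-- `f` is a `2δ`-isometric approximate chart from the unit ball `B₁(q) ⊆ X` onto the unit
ball `B₁(p) ⊆ ℝⁿ`, sending `q` to `p`. -/
def ApproxChart {X : Type*} [MetricSpace X] {n : ℕ} (δ : ℝ) (q : X)
    (p : EuclideanSpace ℝ (Fin n)) (f : X → EuclideanSpace ℝ (Fin n)) : Prop :=
  f q = p ∧
  (∀ x : X, dist q x ≤ 1 → dist p (f x) ≤ 1) ∧
  (∀ x y : X, dist q x ≤ 1 → dist q y ≤ 1 → |dist (f x) (f y) - dist x y| < 2 * δ) ∧
  (∀ v : EuclideanSpace ℝ (Fin n), dist p v ≤ 1 →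
    ∃ x : X, dist q x ≤ 1 ∧ dist (f x) v < 2 * δ)

/-- Centroid estimate: the centroid of three points is within `(d(a,p)+d(b,p))/3` of `p`. -/
lemma cent_dist {E : Type*} [NormedAddCommGroup E] [NormedSpace ℝ E] (p a b : E) :
    dist ((3:ℝ)⁻¹ • (p + a + b)) p ≤ (dist a p + dist b p) / 3 := by
  have h : (3:ℝ)⁻¹ • (p + a + b) - p = (3:ℝ)⁻¹ • ((a - p) + (b - p)) := by module
  rw [dist_eq_norm, h, norm_smul]
  have h1 := norm_add_le (a - p) (b - p)
  rw [dist_eq_norm, dist_eq_norm]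
  have : ‖(3:ℝ)⁻¹‖ = 3⁻¹ := by norm_num
  rw [this]
  nlinarith [norm_nonneg (a - p + (b - p))]

/-- **Approximate cocycle condition for the transition maps.**
For every `n` and `C > 0` there are `δ₀, C' > 0`, with `C'` depending only on `n` (and `C`),
such that: if `q_i, q_j, q_k` are pairwise adjacent points (mutual distances `< 1`) of a
metric space `X` with `2δ`-isometric charts `f_i, f_j, f_k` onto unit balls `B₁(p_i)` etc.,
and affine isometries `A_{ij}, A_{jk}, A_{ik}` of `ℝⁿ` satisfying
`|A_{ij}(f_i x) − f_j x| < Cδ` on `B₁(q_i) ∩ B₁(q_j)` (and likewise for the other pairs),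
then `|A_{jk}(A_{ij} x) − A_{ik} x| < C'·δ` for all `x` in the ball `D_i = B₁(p_i)`. -/
theorem stmt13 (n : ℕ) (C : ℝ) (hC : 0 < C) : ∃ δ₀ C' : ℝ, 0 < δ₀ ∧ 0 < C' ∧
    ∀ (X : Type) [MetricSpace X] (δ : ℝ), 0 < δ → δ < δ₀ →
    ∀ (qi qj qk : X) (pi pj pk : EuclideanSpace ℝ (Fin n))
      (fi fj fk : X → EuclideanSpace ℝ (Fin n))
      (Aij Ajk Aik : EuclideanSpace ℝ (Fin n) →ᵃⁱ[ℝ] EuclideanSpace ℝ (Fin n)),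
      dist qi qj < 1 → dist qi qk < 1 → dist qj qk < 1 →
      ApproxChart δ qi pi fi → ApproxChart δ qj pj fj → ApproxChart δ qk pk fk →
      (∀ x : X, dist qi x ≤ 1 → dist qj x ≤ 1 → dist (Aij (fi x)) (fj x) < C * δ) →
      (∀ x : X, dist qj x ≤ 1 → dist qk x ≤ 1 → dist (Ajk (fj x)) (fk x) < C * δ) →
      (∀ x : X, dist qi x ≤ 1 → dist qk x ≤ 1 → dist (Aik (fi x)) (fk x) < C * δ) →
      ∀ v : EuclideanSpace ℝ (Fin n), dist pi v ≤ 1 →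
        dist (Ajk (Aij v)) (Aik v) < C' * δ := by
  refine ⟨1/100, 15 * (3 * C + 4), by norm_num, by nlinarith, ?_⟩
  intro X _ δ hδ hδ₀ qi qj qk pi pj pk fi fj fk Aij Ajk Aik hij' hik' hjk' hi hj hk Hij Hjk Hik
    v hv
  obtain ⟨hiq, hiball, hiiso, hinet⟩ := hi
  set a := fi qj with ha
  set b := fi qk with hb
  set c : EuclideanSpace ℝ (Fin n) := (3:ℝ)⁻¹ • (pi + a + b) with hc
  have hpa : dist pi a ≤ 1 := hiball qj hij'.le
  have hpb : dist pi b ≤ 1 := hiball qk hik'.le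
  have hab : dist a b < 1 + 2 * δ := by
    have h1 := hiiso qj qk hij'.le hik'.le
    have h2 : dist a b - dist qj qk < 2 * δ := (abs_lt.mp h1).2
    linarith
  have hcp : dist c pi ≤ 2 / 3 := by
    have := cent_dist pi a b
    rw [← hc] at this
    linarith [dist_comm pi a, dist_comm pi b]
  have hca : dist c a ≤ 2 / 3 + 2 * δ / 3 := by
    have hc2 : c = (3:ℝ)⁻¹ • (a + pi + b) := by rw [hc]; module
    have := cent_dist a pi b
    rw [← hc2] at this
    linarith [dist_comm pi a, dist_comm a b]
  have hcb : dist c b ≤ 2 / 3 + 2 * δ / 3 := by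
    have hc2 : c = (3:ℝ)⁻¹ • (b + pi + a) := by rw [hc]; module
    have := cent_dist b pi a
    rw [← hc2] at this
    linarith [dist_comm pi b]
  -- Key: the cocycle defect is small on the ball of radius 1/4 around the centroid c.
  have key : ∀ w : EuclideanSpace ℝ (Fin n), dist c w ≤ 1/4 →
      dist (Ajk (Aij w)) (Aik w) < (3 * C + 4) * δ := by
    intro w hw
    have hpw : dist pi w ≤ 1 := by
      have h1 := dist_triangle pi c w
      rw [dist_comm pi c] at h1
      linarith
    obtain ⟨x, hxq, hxw⟩ := hinet w hpw
    have hwc : dist w c ≤ 1/4 := by rw [dist_comm]; exact hw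
    have hxj : dist qj x ≤ 1 := by
      have hfa : dist (fi x) a ≤ 2 * δ + 1/4 + (2/3 + 2 * δ / 3) := by
        have := dist_triangle4 (fi x) w c a
        linarith
      have h1 := hiiso x qj hxq hij'.le
      have h2 : -(2 * δ) < dist (fi x) (fi qj) - dist x qj := (abs_lt.mp h1).1
      rw [dist_comm qj x]
      rw [← ha] at h2
      linarith
    have hxk : dist qk x ≤ 1 := by
      have hfb : dist (fi x) b ≤ 2 * δ + 1/4 + (2/3 + 2 * δ / 3) := by
        have := dist_triangle4 (fi x) w c b
        linarith
      have h1 := hiiso x qk hxq hik'.le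
      have h2 : -(2 * δ) < dist (fi x) (fi qk) - dist x qk := (abs_lt.mp h1).1
      rw [dist_comm qk x]
      rw [← hb] at h2
      linarith
    have h1 := Hij x hxq hxj
    have h2 := Hjk x hxj hxk
    have h3 := Hik x hxq hxk
    have e1 : dist (Ajk (Aij (fi x))) (Ajk (fj x)) = dist (Aij (fi x)) (fj x) :=
      Ajk.dist_map _ _
    have hmid : dist (Ajk (Aij (fi x))) (Aik (fi x)) < 3 * C * δ := by
      have ht := dist_triangle4 (Ajk (Aij (fi x))) (Ajk (fj x)) (fk x) (Aik (fi x))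
      rw [dist_comm (fk x) (Aik (fi x))] at ht
      linarith
    have e2 : dist (Ajk (Aij w)) (Ajk (Aij (fi x))) = dist w (fi x) := by
      rw [Ajk.dist_map, Aij.dist_map]
    have e3 : dist (Aik (fi x)) (Aik w) = dist (fi x) w := Aik.dist_map _ _
    have ht := dist_triangle4 (Ajk (Aij w)) (Ajk (Aij (fi x))) (Aik (fi x)) (Aik w)
    rw [e2, e3] at ht
    rw [dist_comm w (fi x)] at ht
    linarith
  -- Extend affinely from the small ball to the unit ball around pi.
  have h0 : dist (Ajk (Aij c)) (Aik c) < (3 * C + 4) * δ := key c (by simp)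
  set w : EuclideanSpace ℝ (Fin n) := AffineMap.lineMap c v (8⁻¹ : ℝ) with hwdef
  have hwc : w - c = (8:ℝ)⁻¹ • (v - c) := by
    simp [hwdef, AffineMap.lineMap_apply]
  have hcw : dist c w ≤ 1/4 := by
    have h1 : dist c w = (8:ℝ)⁻¹ * ‖v - c‖ := by
      rw [dist_comm, dist_eq_norm, hwc, norm_smul]
      norm_num
    have h2 : ‖v - c‖ ≤ 5/3 := by
      have := dist_triangle v pi c
      rw [dist_comm v pi] at this
      rw [← dist_eq_norm, dist_comm pi c] at *
      calc ‖v - c‖ = dist v c := (dist_eq_norm v c).symm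
        _ ≤ dist v pi + dist pi c := dist_triangle v pi c
        _ ≤ 1 + 2/3 := by rw [dist_comm v pi, dist_comm pi c]; exact add_le_add hv hcp
        _ = 5/3 := by norm_num
    rw [h1]; linarith
  have hw' := key w hcw
  have eF : Ajk (Aij w) = (1 - (8:ℝ)⁻¹) • (Ajk (Aij c)) + (8:ℝ)⁻¹ • (Ajk (Aij v)) := by
    have h1 : Ajk (Aij w) = (Ajk.toAffineMap.comp Aij.toAffineMap) w := rfl
    rw [h1, hwdef, AffineMap.apply_lineMap, AffineMap.lineMap_apply_module]
    rfl
  have eG : Aik w = (1 - (8:ℝ)⁻¹) • (Aik c) + (8:ℝ)⁻¹ • (Aik v) := by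
    have h1 : Aik w = Aik.toAffineMap w := rfl
    rw [h1, hwdef, AffineMap.apply_lineMap, AffineMap.lineMap_apply_module]
    rfl
  have hu : Ajk (Aij v) - Aik v
      = (8:ℝ) • (Ajk (Aij w) - Aik w) - (7:ℝ) • (Ajk (Aij c) - Aik c) := by
    rw [eF, eG]; module
  have hnorm : ‖Ajk (Aij v) - Aik v‖
      ≤ 8 * ‖Ajk (Aij w) - Aik w‖ + 7 * ‖Ajk (Aij c) - Aik c‖ := by
    rw [hu]
    calc ‖(8:ℝ) • (Ajk (Aij w) - Aik w) - (7:ℝ) • (Ajk (Aij c) - Aik c)‖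
        ≤ ‖(8:ℝ) • (Ajk (Aij w) - Aik w)‖ + ‖(7:ℝ) • (Ajk (Aij c) - Aik c)‖ :=
          norm_sub_le _ _
      _ = 8 * ‖Ajk (Aij w) - Aik w‖ + 7 * ‖Ajk (Aij c) - Aik c‖ := by
          rw [norm_smul, norm_smul]; norm_num
  rw [dist_eq_norm]
  rw [dist_eq_norm] at hw' h0
  linarith
end
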